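/- The atomic Split rule is logically valid in miB-eS: p → q ∨ r ⊩ (p → q) ∨ (p → r) for distinct atoms p, q, r, but this sequent is not derivable in intuitionistic propositional logic; hence intuitionistic logic is incomplete over miB-eS logical consequence. -/
import Mathlib


/-- Propositional atoms: `⊥` and countably many atoms `p n`. -/
inductive PAtom : Type
  | bot
  | p (n : ℕ)
deriving DecidableEq

/-- Formulas of the propositional language. -/
inductive Formula : Type
  | atom (a : PAtom)
  | and (A B : Formula)
  | or (A B : Formula)
  | imp (A B : Formula)
deriving DecidableEq

/-- Higher-level atomic rules: a rule has a list of premises, each of which may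
discharge a list of lower-level rules, and has an atomic conclusion.
A level-0 rule (axiom) is `mk [] a`. -/
inductive AtomicRule : Type
  | mk (prems : List (List AtomicRule × PAtom)) (concl : PAtom)

/-- The atomic explosion rules: from `⊥` infer any atom. -/
def AE : Set AtomicRule := { r | ∃ a, r = AtomicRule.mk [([], PAtom.bot)] a }

/-- An atomic base is a set of atomic rules containing atomic explosion. -/
def IsBase (B : Set AtomicRule) : Prop := AE ⊆ B

/-- Atomic derivability: `Der B Γ a` means the atom `a` is derivable from the assumed
atoms in `Γ` using the rules of `B` (rules discharged by an application of a
higher-level rule are temporarily added to the base). -/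
inductive Der : Set AtomicRule → Set PAtom → PAtom → Prop
  | assum {B : Set AtomicRule} {Γ : Set PAtom} {a : PAtom} : a ∈ Γ → Der B Γ a
  | app {B : Set AtomicRule} {Γ : Set PAtom} (prems : List (List AtomicRule × PAtom)) (a : PAtom) :
      AtomicRule.mk prems a ∈ B →
      (∀ pr ∈ prems, Der (B ∪ { r | r ∈ pr.1 }) Γ pr.2) →
      Der B Γ a

/-- The miB-eS forcing relation `⊩_B A` (consequence with empty antecedent):
atoms by atomic derivability, `∧` by both conjuncts, `∨` by one disjunct,
`→` by consequence over all extensions of the base. -/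
def Force : Set AtomicRule → Formula → Prop
  | B, .atom a => Der B ∅ a
  | B, .and A C => Force B A ∧ Force B C
  | B, .or A C => Force B A ∨ Force B C
  | B, .imp A C => ∀ X : Set AtomicRule, B ⊆ X → Force X A → Force X C

/-- The miB-eS consequence relation `Γ ⊩_B A`. -/
def Cons (B : Set AtomicRule) (Γ : Finset Formula) (A : Formula) : Prop :=
  if Γ = ∅ then Force B A
  else ∀ X : Set AtomicRule, B ⊆ X → (∀ G ∈ Γ, Force X G) → Force X A

/-- Intuitionistic propositional natural deduction. -/
inductive IL : Finset Formula → Formula → Prop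
  | hyp {Γ : Finset Formula} {A : Formula} : A ∈ Γ → IL Γ A
  | andI {Γ : Finset Formula} {A B : Formula} : IL Γ A → IL Γ B → IL Γ (A.and B)
  | andE1 {Γ : Finset Formula} {A B : Formula} : IL Γ (A.and B) → IL Γ A
  | andE2 {Γ : Finset Formula} {A B : Formula} : IL Γ (A.and B) → IL Γ B
  | orI1 {Γ : Finset Formula} {A B : Formula} : IL Γ A → IL Γ (A.or B)
  | orI2 {Γ : Finset Formula} {A B : Formula} : IL Γ B → IL Γ (A.or B)
  | orE {Γ : Finset Formula} {A B C : Formula} :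
      IL Γ (A.or B) → IL (insert A Γ) C → IL (insert B Γ) C → IL Γ C
  | impI {Γ : Finset Formula} {A B : Formula} : IL (insert A Γ) B → IL Γ (A.imp B)
  | impE {Γ : Finset Formula} {A B : Formula} : IL Γ (A.imp B) → IL Γ A → IL Γ B
  | botE {Γ : Finset Formula} {A : Formula} : IL Γ (Formula.atom PAtom.bot) → IL Γ A

lemma Der.mono {B B' : Set AtomicRule} {Γ Γ' : Set PAtom} {a : PAtom}
    (hB : B ⊆ B') (hΓ : Γ ⊆ Γ') (h : Der B Γ a) : Der B' Γ' a := by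
  induction h generalizing B' Γ' with
  | assum h => exact Der.assum (hΓ h)
  | app prems a hmem hprems ih =>
      exact Der.app prems a (hB hmem)
        (fun pr hpr => ih pr hpr (Set.union_subset_union_left _ hB) hΓ)

lemma der_cut {a : PAtom} :
    ∀ {B : Set AtomicRule} {Γ : Set PAtom} {b : PAtom}, Der B Γ b →
      ∀ X : Set AtomicRule, B = X ∪ {AtomicRule.mk [] a} → Der X ∅ a → Der X Γ b := by
  intro B Γ b h
  induction h with
  | assum h => intro X _ _; exact Der.assum h
  | app prems b hmem hprems ih =>
      intro X hB hp
      subst hB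
      rcases hmem with hX | hax
      · refine Der.app prems b hX (fun pr hpr => ?_)
        refine ih pr hpr (X ∪ {r | r ∈ pr.1}) ?_
          (hp.mono Set.subset_union_left subset_rfl)
        ext r
        simp only [Set.mem_union, Set.mem_setOf_eq, Set.mem_singleton_iff]
        tauto
      · simp only [Set.mem_singleton_iff, AtomicRule.mk.injEq] at hax
        obtain ⟨h1, h2⟩ := hax
        subst h1; subst h2
        exact hp.mono subset_rfl (Set.empty_subset _)

/-- Kripke worlds for the countermodel. -/
inductive KW : Type | w0 | w1 | w2

def kle (u v : KW) : Prop := u = v ∨ u = KW.w0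

lemma kle_refl (u : KW) : kle u u := Or.inl rfl

lemma kle_trans {u v w : KW} (h1 : kle u v) (h2 : kle v w) : kle u w := by
  rcases h1 with rfl | rfl
  · exact h2
  · exact Or.inr rfl

def kval (np nq nr : ℕ) : KW → PAtom → Prop
  | _, PAtom.bot => False
  | KW.w0, PAtom.p _ => False
  | KW.w1, PAtom.p n => n = np ∨ n = nq
  | KW.w2, PAtom.p n => n = np ∨ n = nr

def ksem (np nq nr : ℕ) : KW → Formula → Prop
  | w, .atom a => kval np nq nr w a
  | w, .and A B => ksem np nq nr w A ∧ ksem np nq nr w B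
  | w, .or A B => ksem np nq nr w A ∨ ksem np nq nr w B
  | w, .imp A B => ∀ w', kle w w' → ksem np nq nr w' A → ksem np nq nr w' B

lemma ksem_mono (np nq nr : ℕ) {u v : KW} (h : kle u v) :
    ∀ F : Formula, ksem np nq nr u F → ksem np nq nr v F := by
  intro F
  induction F generalizing u v with
  | atom a =>
      rcases h with rfl | rfl
      · exact id
      · intro h'; cases a <;> exact h'.elim
  | and A B ihA ihB => exact fun ⟨h1, h2⟩ => ⟨ihA h h1, ihB h h2⟩
  | or A B ihA ihB => exact fun h' => h'.imp (ihA h) (ihB h)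
  | imp A B ihA ihB =>
      intro h' w' hle hA
      exact h' w' (kle_trans h hle) hA

lemma il_sound (np nq nr : ℕ) {Γ : Finset Formula} {A : Formula} (h : IL Γ A) :
    ∀ w, (∀ G ∈ Γ, ksem np nq nr w G) → ksem np nq nr w A := by
  induction h with
  | hyp hmem => exact fun w hΓ => hΓ _ hmem
  | andI _ _ ih1 ih2 => exact fun w hΓ => ⟨ih1 w hΓ, ih2 w hΓ⟩
  | andE1 _ ih => exact fun w hΓ => (ih w hΓ).1
  | andE2 _ ih => exact fun w hΓ => (ih w hΓ).2
  | orI1 _ ih => exact fun w hΓ => Or.inl (ih w hΓ)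
  | orI2 _ ih => exact fun w hΓ => Or.inr (ih w hΓ)
  | orE _ _ _ ih ih1 ih2 =>
      intro w hΓ
      rcases ih w hΓ with hA | hB
      · refine ih1 w (fun G hG => ?_)
        rcases Finset.mem_insert.mp hG with rfl | hG
        · exact hA
        · exact hΓ _ hG
      · refine ih2 w (fun G hG => ?_)
        rcases Finset.mem_insert.mp hG with rfl | hG
        · exact hB
        · exact hΓ _ hG
  | impI _ ih =>
      intro w hΓ w' hle hA
      refine ih w' (fun G hG => ?_)
      rcases Finset.mem_insert.mp hG with rfl | hG
      · exact hA
      · exact ksem_mono np nq nr hle G (hΓ _ hG)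
  | impE _ _ ih1 ih2 => exact fun w hΓ => ih1 w hΓ w (kle_refl w) (ih2 w hΓ)
  | botE _ ih =>
      intro w hΓ
      have h := ih w hΓ
      cases w <;> exact h.elim

/-- for distinct atoms `p, q, r`, the atomic Split rule is logically
valid in miB-eS (`p → q ∨ r ⊩ (p → q) ∨ (p → r)`), but the sequent is not
derivable in intuitionistic propositional logic; hence `IL` is incomplete over
miB-eS logical consequence. -/
theorem atomic_split_miBeS_incompleteness (np nq nr : ℕ)
    (hpq : np ≠ nq) (hpr : np ≠ nr) (hqr : nq ≠ nr) :
    (∀ B : Set AtomicRule, IsBase B →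
      Cons B {(Formula.atom (PAtom.p np)).imp
                ((Formula.atom (PAtom.p nq)).or (Formula.atom (PAtom.p nr)))}
        (((Formula.atom (PAtom.p np)).imp (Formula.atom (PAtom.p nq))).or
          ((Formula.atom (PAtom.p np)).imp (Formula.atom (PAtom.p nr))))) ∧
    ¬ IL {(Formula.atom (PAtom.p np)).imp
            ((Formula.atom (PAtom.p nq)).or (Formula.atom (PAtom.p nr)))}
        (((Formula.atom (PAtom.p np)).imp (Formula.atom (PAtom.p nq))).or
          ((Formula.atom (PAtom.p np)).imp (Formula.atom (PAtom.p nr)))) := by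
  constructor
  · intro B _hB
    have hne : ({(Formula.atom (PAtom.p np)).imp
        ((Formula.atom (PAtom.p nq)).or (Formula.atom (PAtom.p nr)))} : Finset Formula) ≠ ∅ := by
      simp
    rw [Cons, if_neg hne]
    intro X hBX hΓ
    have hF := hΓ _ (Finset.mem_singleton_self _)
    simp only [Force] at hF ⊢
    have hdp : Der (X ∪ {AtomicRule.mk [] (PAtom.p np)}) ∅ (PAtom.p np) :=
      Der.app [] _ (Set.mem_union_right _ rfl) (fun pr hpr => by simp at hpr)
    have hqr' := hF _ Set.subset_union_left hdp
    rcases hqr' with hq | hr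
    · left
      intro Y hXY hp
      exact der_cut (hq.mono (Set.union_subset_union_left _ hXY) subset_rfl) Y rfl hp
    · right
      intro Y hXY hp
      exact der_cut (hr.mono (Set.union_subset_union_left _ hXY) subset_rfl) Y rfl hp
  · intro hIL
    have hsem : ∀ G ∈ ({(Formula.atom (PAtom.p np)).imp
        ((Formula.atom (PAtom.p nq)).or (Formula.atom (PAtom.p nr)))} : Finset Formula),
        ksem np nq nr KW.w0 G := by
      intro G hG
      rw [Finset.mem_singleton] at hG
      subst hG
      intro w' _hle hp
      cases w' with
      | w0 => simp [ksem, kval] at hp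
      | w1 => exact Or.inl (Or.inr rfl)
      | w2 => exact Or.inr (Or.inr rfl)
    have h0 := il_sound np nq nr hIL KW.w0 hsem
    rcases h0 with h | h
    · have h2 := h KW.w2 (Or.inr rfl) (Or.inl rfl)
      rcases h2 with h' | h'
      · exact hpq h'.symm
      · exact hqr h'
    · have h1 := h KW.w1 (Or.inr rfl) (Or.inl rfl)
      rcases h1 with h' | h'
      · exact hpr h'.symm
      · exact hqr h'.symm
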